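/- arXiv:math/0411109 — 3 statements merged into one kernel-verified Lean document; each statement's English description precedes it below -/
import Mathlib

section
/- Let 0 ≤ α ≤ 2, 1+μ > 0, γ > 0 and t ≥ 0. For any continuously differentiable function u: [0,∞) → ℝ with compact support one has ∫_0^t u(r)² (1+|r-t|)^{-2-μ} r² (1+t+r)^{-α} dr + ∫_t^∞ u(r)² (1+|r-t|)^{-1+γ} r² (1+t+r)^{-α} dr ≤ C ( ∫_0^t |u'(r)|² (1+|r-t|)^{-μ} r² (1+t+r)^{-α} dr + ∫_t^∞ |u'(r)|² (1+|r-t|)^{1+γ} r² (1+t+r)^{-α} dr ), where the constant C depends only on lower bounds for γ and 1+μ. -/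
/-!
Let `w r = r² (1 + t + r)^(-α)`; for `α ≤ 2` it is nondecreasing on `[0, ∞)`. For
`ψ = s^e w` with `s = 1 + |r - t|` of slope `σ = ±1` and `κ = σ e > 0`, one has
`(u² ψ)' = 2 u u' ψ + u² ψ'` with `ψ' ≥ κ s^(e-1) w`, and AM-GM absorbs the cross term:
`2 |u u' ψ| ≤ κ/2 u² s^(e-1) w + 2/κ u'² s^(e+1) w`. Integrating gives a Hardy inequality
with boundary terms. Outside the cone (`e = γ` on `[t, ∞)`) the term at infinity vanishes and the
term `u(t)² w(t)` at the cone has a good sign; inside (`e = -(1 + μ)` on `[0, t]`) the term at `0`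
vanishes since `w 0 = 0`, and the term `u(t)² w(t)` is paid for by the exterior estimate.
-/

open Real MeasureTheory Set

theorem neg_two_mul_le_of_sq_le_mul {κ ψ q p : ℝ} (hκ : 0 < κ) (hq : 0 ≤ q) (hp : 0 ≤ p)
    (hψ : ψ ^ 2 ≤ q * p) (x y : ℝ) :
    -(2 * x * y * ψ) ≤ κ / 2 * (x ^ 2 * q) + 2 / κ * (y ^ 2 * p) := by
  have hAB : κ / 2 * (x ^ 2 * q) * (2 / κ * (y ^ 2 * p)) = (x * y) ^ 2 * (q * p) := by
    field_simp
  have hsq : (2 * x * y * ψ) ^ 2 ≤ (κ / 2 * (x ^ 2 * q) + 2 / κ * (y ^ 2 * p)) ^ 2 := by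
    have := mul_le_mul_of_nonneg_left hψ (sq_nonneg (x * y))
    nlinarith [sq_nonneg (κ / 2 * (x ^ 2 * q) - 2 / κ * (y ^ 2 * p))]
  exact neg_le.mpr (abs_le_of_sq_le_sq' hsq (by positivity)).1

theorem integral_sq_mul_le_of_hasDerivAt {a b κ : ℝ} {u u' ψ ψ' q p : ℝ → ℝ} (hab : a ≤ b)
    (hκ : 0 < κ) (hu : ContinuousOn u (Icc a b)) (hu' : ∀ r ∈ Ioo a b, HasDerivAt u (u' r) r)
    (hψ : ContinuousOn ψ (Icc a b)) (hψ' : ∀ r ∈ Ioo a b, HasDerivAt ψ (ψ' r) r)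
    (hq : IntegrableOn (fun r => u r ^ 2 * q r) (Icc a b))
    (hp : IntegrableOn (fun r => u' r ^ 2 * p r) (Icc a b))
    (hq₀ : ∀ r ∈ Ioo a b, 0 ≤ q r) (hp₀ : ∀ r ∈ Ioo a b, 0 ≤ p r)
    (hψqp : ∀ r ∈ Ioo a b, ψ r ^ 2 ≤ q r * p r) (hκq : ∀ r ∈ Ioo a b, κ * q r ≤ ψ' r) :
    κ / 2 * ∫ r in a..b, u r ^ 2 * q r ≤
      u b ^ 2 * ψ b - u a ^ 2 * ψ a + 2 / κ * ∫ r in a..b, u' r ^ 2 * p r := by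
  have hφ : IntegrableOn (fun r => κ / 2 * (u r ^ 2 * q r) - 2 / κ * (u' r ^ 2 * p r))
      (Icc a b) :=
    (hq.const_mul _).sub (hp.const_mul _)
  have hF : ∀ r ∈ Ioo a b, HasDerivAt (fun r => u r ^ 2 * ψ r)
      (2 * u r * u' r * ψ r + u r ^ 2 * ψ' r) r := fun r hr =>
    (((hu' r hr).pow 2).mul (hψ' r hr)).congr_deriv (by simp)
  have key := intervalIntegral.integral_le_sub_of_hasDeriv_right_of_le
    (g := fun r => u r ^ 2 * ψ r) hab ((hu.pow 2).mul hψ)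
    (fun r hr => (hF r hr).hasDerivWithinAt) hφ fun r hr => by
      have := neg_two_mul_le_of_sq_le_mul hκ (hq₀ r hr) (hp₀ r hr) (hψqp r hr) (u r) (u' r)
      have := mul_le_mul_of_nonneg_left (hκq r hr) (sq_nonneg (u r))
      nlinarith
  rw [intervalIntegral.integral_sub, intervalIntegral.integral_const_mul,
    intervalIntegral.integral_const_mul] at key
  · linarith
  · exact (intervalIntegrable_iff_integrableOn_Icc_of_le hab).2 (hq.const_mul _)
  · exact (intervalIntegrable_iff_integrableOn_Icc_of_le hab).2 (hp.const_mul _)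

theorem integral_sq_mul_rpow_mul_le {a b σ e : ℝ} {s w w' u : ℝ → ℝ} (hab : a ≤ b)
    (hσe : 0 < σ * e) (hs : ContinuousOn s (Icc a b)) (hs' : ∀ r ∈ Ioo a b, HasDerivAt s σ r)
    (hs₀ : ∀ r ∈ Icc a b, 0 < s r) (hw : ContinuousOn w (Icc a b))
    (hw' : ∀ r ∈ Ioo a b, HasDerivAt w (w' r) r) (hw₀ : ∀ r ∈ Icc a b, 0 ≤ w r)
    (hw'₀ : ∀ r ∈ Ioo a b, 0 ≤ w' r) (hu : ContDiff ℝ 1 u) :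
    σ * e / 2 * ∫ r in a..b, u r ^ 2 * (s r ^ (e - 1) * w r) ≤
      u b ^ 2 * (s b ^ e * w b) - u a ^ 2 * (s a ^ e * w a) +
        2 / (σ * e) * ∫ r in a..b, deriv u r ^ 2 * (s r ^ (e + 1) * w r) := by
  have hpow (x : ℝ) : ContinuousOn (fun r => s r ^ x * w r) (Icc a b) :=
    (hs.rpow_const fun r hr => Or.inl (hs₀ r hr).ne').mul hw
  have hIoo : Ioo a b ⊆ Icc a b := Ioo_subset_Icc_self
  refine integral_sq_mul_le_of_hasDerivAt hab hσe hu.continuous.continuousOn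
    (fun r _ => ((hu.differentiable one_ne_zero) r).hasDerivAt) (hpow e)
    (fun r hr => ((hs' r hr).rpow_const (p := e) (Or.inl (hs₀ r (hIoo hr)).ne')).mul (hw' r hr))
    ((hu.continuous.pow 2).continuousOn.mul (hpow _)).integrableOn_Icc
    (((hu.continuous_deriv le_rfl).pow 2).continuousOn.mul (hpow _)).integrableOn_Icc
    (fun r hr => ?_) (fun r hr => ?_) (fun r hr => ?_) (fun r hr => ?_)
  all_goals have hsr := hs₀ r (hIoo hr); have hwr := hw₀ r (hIoo hr)
  · positivity
  · positivity
  · have : s r ^ (e - 1) * s r ^ (e + 1) = (s r ^ e) ^ 2 := by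
      rw [← rpow_add hsr, ← rpow_natCast, ← rpow_mul hsr.le]
      ring_nf
    exact le_of_eq (by linear_combination -(w r) ^ 2 * this)
  · have := hw'₀ r hr
    have : 0 ≤ s r ^ e * w' r := by positivity
    linarith

theorem HasCompactSupport.eventually_atTop_eq_zero {E : Type*} [Zero E] {f : ℝ → E}
    (hf : HasCompactSupport f) : ∀ᶠ r in Filter.atTop, f r = 0 :=
  (hasCompactSupport_iff_eventuallyEq.1 hf).filter_mono
    (Filter.coclosedCompact_eq_cocompact (X := ℝ) ▸ atTop_le_cocompact)

theorem setIntegral_Ioi_eq_intervalIntegral_of_eq_zero {E : Type*} [NormedAddCommGroup E]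
    [NormedSpace ℝ E] {f : ℝ → E} {a b : ℝ} (hab : a ≤ b) (hf : ∀ r, b < r → f r = 0) :
    ∫ r in Ioi a, f r = ∫ r in a..b, f r := by
  rw [intervalIntegral.integral_of_le hab,
    setIntegral_eq_of_subset_of_forall_sdiff_eq_zero measurableSet_Ioi Ioc_subset_Ioi_self]
  exact fun r ⟨hra, hrb⟩ => hf r (not_le.1 fun h => hrb ⟨hra, h⟩)

theorem hasDerivAt_sq_mul_rpow_neg {c α r : ℝ} (h : 0 < c + r) :
    HasDerivAt (fun x => x ^ 2 * (c + x) ^ (-α))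
      (r * (c + r) ^ (-α - 1) * (2 * (c + r) - α * r)) r := by
  have := (hasDerivAt_pow 2 r).mul (((hasDerivAt_id r).const_add c).rpow_const (p := -α)
    (Or.inl h.ne'))
  refine this.congr_deriv ?_
  have hsplit : (c + r) ^ (-α) = (c + r) ^ (-α - 1) * (c + r) := by
    rw [← rpow_add_one h.ne']; ring_nf
  norm_num [hsplit]
  ring

theorem exterior_hardy {γ α t : ℝ} {u : ℝ → ℝ} (hγ : 0 < γ) (hα : α ≤ 2) (ht : 0 ≤ t)
    (hu : ContDiff ℝ 1 u) (hsupp : HasCompactSupport u) :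
    u t ^ 2 * (t ^ 2 * (1 + t + t) ^ (-α)) +
        γ / 2 * ∫ r in Ioi t, u r ^ 2 * (1 + |r - t|) ^ (-1 + γ) * r ^ 2 * (1 + t + r) ^ (-α) ≤
      2 / γ * ∫ r in Ioi t,
        deriv u r ^ 2 * (1 + |r - t|) ^ (1 + γ) * r ^ 2 * (1 + t + r) ^ (-α) := by
  obtain ⟨R, hR⟩ := ((hsupp.eventually_atTop_eq_zero.and
    hsupp.deriv.eventually_atTop_eq_zero).and
      (Filter.eventually_ge_atTop t)).exists_forall_of_atTop
  have htR : t ≤ R := (hR R le_rfl).2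
  have hw (r : ℝ) (hr : r ∈ Icc t R) :=
    hasDerivAt_sq_mul_rpow_neg (α := α) (c := 1 + t) (r := r) (by linarith [hr.1])
  have key := integral_sq_mul_rpow_mul_le (σ := 1) (e := γ) (s := fun r => 1 + |r - t|) htR
    (by simpa using hγ) (by fun_prop) (fun r hr => ?_) (fun r _ => by positivity)
    (continuousOn_of_forall_continuousAt fun r hr => (hw r hr).continuousAt)
    (fun r hr => hw r (Ioo_subset_Icc_self hr))
    (fun r hr => by have : 0 ≤ r := ht.trans hr.1; positivity) (fun r hr => ?_) hu
  · rw [show γ - 1 = -1 + γ by ring, show γ + 1 = 1 + γ by ring, one_mul, (hR R le_rfl).1.1]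
      at key
    rw [setIntegral_Ioi_eq_intervalIntegral_of_eq_zero htR,
      setIntegral_Ioi_eq_intervalIntegral_of_eq_zero htR]
    · simp only [mul_assoc] at key ⊢
      simpa using key
    all_goals exact fun r hr => by simp [(hR r hr.le).1]
  · simpa using ((hasDerivAt_abs_pos (sub_pos.2 hr.1)).comp r
      ((hasDerivAt_id' r).sub_const t)).const_add 1
  · have : 0 ≤ r := ht.trans hr.1.le
    exact mul_nonneg (by positivity) (by nlinarith)

theorem interior_hardy {μ α t : ℝ} {u : ℝ → ℝ} (hμ : 0 < 1 + μ) (hα : α ≤ 2) (ht : 0 ≤ t)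
    (hu : ContDiff ℝ 1 u) :
    (1 + μ) / 2 * ∫ r in Ioc 0 t,
        u r ^ 2 * (1 + |r - t|) ^ (-(2 + μ)) * r ^ 2 * (1 + t + r) ^ (-α) ≤
      u t ^ 2 * (t ^ 2 * (1 + t + t) ^ (-α)) + 2 / (1 + μ) * ∫ r in Ioc 0 t,
        deriv u r ^ 2 * (1 + |r - t|) ^ (-μ) * r ^ 2 * (1 + t + r) ^ (-α) := by
  have hw (r : ℝ) (hr : r ∈ Icc 0 t) :=
    hasDerivAt_sq_mul_rpow_neg (α := α) (c := 1 + t) (r := r) (by linarith [hr.1])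
  have key := integral_sq_mul_rpow_mul_le (σ := -1) (e := -(1 + μ))
    (s := fun r => 1 + |r - t|) ht (by simpa using hμ) (by fun_prop) (fun r hr => ?_)
    (fun r _ => by positivity)
    (continuousOn_of_forall_continuousAt fun r hr => (hw r hr).continuousAt)
    (fun r hr => hw r (Ioo_subset_Icc_self hr)) (fun r hr => by have := hr.1; positivity)
    (fun r hr => ?_) hu
  · rw [show -1 * -(1 + μ) = 1 + μ by ring, show -(1 + μ) - 1 = -(2 + μ) by ring,
      show -(1 + μ) + 1 = -μ by ring] at key
    rw [← intervalIntegral.integral_of_le ht, ← intervalIntegral.integral_of_le ht]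
    simp only [mul_assoc] at key ⊢
    simpa using key
  · simpa using ((hasDerivAt_abs_neg (sub_neg.2 hr.2)).comp r
      ((hasDerivAt_id' r).sub_const t)).const_add 1
  · have : 0 ≤ r := hr.1.le
    exact mul_nonneg (by positivity) (by nlinarith)

theorem add_le_sq_mul_add_of_le {A A' B B' W κ ν : ℝ} (hκ : 0 < κ) (hν : 0 < ν) (hW : 0 ≤ W)
    (hB : 0 ≤ B) (hA' : 0 ≤ A') (hB' : 0 ≤ B') (hext : W + κ / 2 * B ≤ 2 / κ * B')
    (hint : ν / 2 * A ≤ W + 2 / ν * A') :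
    A + B ≤ (2 / ν + 2 / κ) ^ 2 * (A' + B') := by
  set x := 2 / ν
  set y := 2 / κ
  have hx : 0 < x := by positivity
  have hy : 0 < y := by positivity
  have hA : A ≤ x * W + x ^ 2 * A' := by
    rw [show ν / 2 = x⁻¹ by simp [x]] at hint
    have := mul_le_mul_of_nonneg_left hint hx.le
    rw [← mul_assoc, mul_inv_cancel₀ hx.ne', one_mul] at this
    linarith
  have hB : B ≤ y ^ 2 * B' - y * W := by
    rw [show κ / 2 = y⁻¹ by simp [y]] at hext
    have := mul_le_mul_of_nonneg_left hext hy.le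
    rw [mul_add, ← mul_assoc y y⁻¹, mul_inv_cancel₀ hy.ne', one_mul] at this
    linarith
  have hW' : W ≤ y * B' := by nlinarith
  have hxy : 0 ≤ x * y := by positivity
  nlinarith [mul_le_mul_of_nonneg_left hW' hx.le, mul_nonneg hxy hA', mul_nonneg hxy hB',
    mul_nonneg (sq_nonneg x) hB', mul_nonneg (sq_nonneg y) hA']

theorem setIntegral_sq_mul_weight_nonneg {s : Set ℝ} (hs : MeasurableSet s) (hs₀ : s ⊆ Ici 0)
    {t e α : ℝ} (ht : 0 ≤ t) (f : ℝ → ℝ) :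
    0 ≤ ∫ r in s, f r ^ 2 * (1 + |r - t|) ^ e * r ^ 2 * (1 + t + r) ^ (-α) :=
  setIntegral_nonneg hs fun r hr => by
    have : 0 ≤ r := hs₀ hr
    positivity

/-- a weighted one-dimensional Hardy-type inequality with weights depending
on the distance to the light cone.  The constant depends only on lower bounds for `γ`
and `1+μ`. -/
theorem lightcone_hardy_inequality (γ₀ ν₀ : ℝ) (hγ₀ : 0 < γ₀) (hν₀ : 0 < ν₀) :
    ∃ C > 0, ∀ (γ μ α t : ℝ) (u : ℝ → ℝ),
      γ₀ ≤ γ → ν₀ ≤ 1 + μ → 0 ≤ α → α ≤ 2 → 0 ≤ t →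
      ContDiff ℝ 1 u → HasCompactSupport u →
      (∫ r in Set.Ioc (0:ℝ) t,
          (u r)^2 * (1 + |r - t|) ^ (-(2 + μ)) * r^2 * (1 + t + r) ^ (-α)) +
        (∫ r in Set.Ioi t,
          (u r)^2 * (1 + |r - t|) ^ (-1 + γ) * r^2 * (1 + t + r) ^ (-α)) ≤
      C * ((∫ r in Set.Ioc (0:ℝ) t,
            (deriv u r)^2 * (1 + |r - t|) ^ (-μ) * r^2 * (1 + t + r) ^ (-α)) +
        (∫ r in Set.Ioi t,
            (deriv u r)^2 * (1 + |r - t|) ^ (1 + γ) * r^2 * (1 + t + r) ^ (-α))) := by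
  refine ⟨(2 / ν₀ + 2 / γ₀) ^ 2, by positivity, ?_⟩
  intro γ μ α t u hγ hμ _ hα ht hu hsupp
  have hγ' : 0 < γ := hγ₀.trans_le hγ
  have hμ' : 0 < 1 + μ := hν₀.trans_le hμ
  have hIoc : Ioc 0 t ⊆ Ici 0 := fun r hr => hr.1.le
  have hIoi : Ioi t ⊆ Ici 0 := fun r hr => ht.trans hr.le
  have hA' := setIntegral_sq_mul_weight_nonneg measurableSet_Ioc hIoc ht (deriv u)
    (e := -μ) (α := α)
  have hB := setIntegral_sq_mul_weight_nonneg measurableSet_Ioi hIoi ht u (e := -1 + γ) (α := α)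
  have hB' := setIntegral_sq_mul_weight_nonneg measurableSet_Ioi hIoi ht (deriv u)
    (e := 1 + γ) (α := α)
  calc _ ≤ (2 / (1 + μ) + 2 / γ) ^ 2 * (_ + _) :=
        add_le_sq_mul_add_of_le hγ' hμ' (by positivity) hB hA' hB'
          (exterior_hardy hγ' hα ht hu hsupp) (interior_hardy hμ' hα ht hu)
    _ ≤ _ := by gcongr
end

section
/- Let k ∈ {1,2}, γ > 0, r ≥ 0 and t > 0. Then ∫_{S²} (1 + |r e₁ + t ω|^{k+γ})^{-1} dS(ω) ≤ C t^{-k}, where e₁ = (1,0,0), dS is the normalized surface measure on the unit sphere in ℝ³, and C depends only on γ and k. -/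
open Real MeasureTheory Metric Set ENNReal
open scoped Pointwise

noncomputable section

namespace SphereDecayAux

local notation "E3" => EuclideanSpace ℝ (Fin 3)

lemma dim3 : Module.finrank ℝ (EuclideanSpace ℝ (Fin 3)) = 3 := by
  simp [finrank_euclideanSpace]

lemma vb_pos : 0 < (volume : Measure E3) (ball 0 1) := measure_ball_pos _ _ one_pos

lemma vb_ne_top : (volume : Measure E3) (ball 0 1) ≠ ∞ := measure_ball_lt_top.ne

/-- Volume of a cone/tube over a cap: the union of `τ • ω` for `τ ∈ (0,1)` and
`ω` on the sphere within `ρ` of `ω₀` is contained in a union of `⌈1/ρ⌉+1` balls of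
radius `2ρ`. -/
lemma tube_vol (ω₀ : E3) (hω₀ : ‖ω₀‖ = 1) (ρ : ℝ) (hρ : 0 < ρ) (hρ1 : ρ ≤ 1) :
    (volume : Measure E3) (Ioo (0:ℝ) 1 • (ball ω₀ ρ ∩ sphere (0:E3) 1))
      ≤ ENNReal.ofReal (24 * ρ ^ 2) * (volume : Measure E3) (ball (0:E3) 1) := by
  set N : ℕ := ⌈1/ρ⌉₊ with hN
  have hN1 : 1 ≤ N := Nat.one_le_ceil_iff.2 (by positivity)
  have hNpos : (0:ℝ) < N := by exact_mod_cast hN1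
  have hinvN : 1 / (N:ℝ) ≤ ρ := by
    rw [div_le_iff₀ hNpos]
    have : 1/ρ ≤ (N:ℝ) := Nat.le_ceil _
    calc (1:ℝ) = ρ * (1/ρ) := by field_simp
    _ ≤ ρ * N := by exact mul_le_mul_of_nonneg_left this hρ.le
  have hsub : Ioo (0:ℝ) 1 • (ball ω₀ ρ ∩ sphere (0:E3) 1) ⊆
      ⋃ j ∈ Finset.range (N+1), ball (((j:ℝ)/(N:ℝ)) • ω₀) (2*ρ) := by
    rintro x ⟨τ, hτ, ω, ⟨hωb, hωs⟩, rfl⟩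
    have hτ0 : 0 < τ := hτ.1
    have hτ1 : τ < 1 := hτ.2
    have hω1 : ‖ω‖ = 1 := by simpa using hωs
    set j : ℕ := ⌊τ * N⌋₊ with hj
    have hjN : j ≤ N := by
      have : τ * N ≤ N := by nlinarith
      exact Nat.floor_le_of_le this
    refine Set.mem_biUnion (Finset.mem_range.2 (Nat.lt_succ_of_le hjN)) ?_
    have hjle : (j:ℝ) ≤ τ * N := Nat.floor_le (by positivity)
    have hjlt : τ * N < j + 1 := Nat.lt_floor_add_one _
    have h1 : ‖τ • ω - τ • ω₀‖ < ρ := by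
      rw [← smul_sub, norm_smul, Real.norm_eq_abs, abs_of_pos hτ0]
      have : ‖ω - ω₀‖ < ρ := by simpa [dist_eq_norm] using hωb
      nlinarith
    have h2 : ‖τ • ω₀ - ((j:ℝ)/(N:ℝ)) • ω₀‖ ≤ 1/(N:ℝ) := by
      rw [← sub_smul, norm_smul, Real.norm_eq_abs, hω₀, mul_one]
      rw [abs_le]
      constructor
      · have : (j:ℝ)/(N:ℝ) ≤ τ := by
          rw [div_le_iff₀ hNpos]; exact hjle
        have h0N : (0:ℝ) ≤ 1/(N:ℝ) := by positivity
        linarith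
      · have : τ ≤ (j:ℝ)/(N:ℝ) + 1/(N:ℝ) := by
          rw [← add_div, le_div_iff₀ hNpos]; linarith
        linarith
    have : dist (τ • ω) (((j:ℝ)/(N:ℝ)) • ω₀) < 2 * ρ := by
      rw [dist_eq_norm]
      calc ‖τ • ω - ((j:ℝ)/(N:ℝ)) • ω₀‖
          ≤ ‖τ • ω - τ • ω₀‖ + ‖τ • ω₀ - ((j:ℝ)/(N:ℝ)) • ω₀‖ := norm_sub_le_norm_sub_add_norm_sub _ _ _
        _ < ρ + 1/(N:ℝ) := by linarith [h2]
        _ ≤ 2 * ρ := by linarith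
    exact this
  calc (volume : Measure E3) (Ioo (0:ℝ) 1 • (ball ω₀ ρ ∩ sphere (0:E3) 1))
      ≤ (volume : Measure E3) (⋃ j ∈ Finset.range (N+1), ball (((j:ℝ)/(N:ℝ)) • ω₀) (2*ρ)) :=
        measure_mono hsub
    _ ≤ ∑ j ∈ Finset.range (N+1), (volume : Measure E3) (ball (((j:ℝ)/(N:ℝ)) • ω₀) (2*ρ)) :=
        measure_biUnion_finset_le _ _
    _ = ∑ j ∈ Finset.range (N+1), ENNReal.ofReal ((2*ρ) ^ Module.finrank ℝ (EuclideanSpace ℝ (Fin 3))) * (volume : Measure E3) (ball (0:E3) 1) := by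
        refine Finset.sum_congr rfl fun j _ => ?_
        exact Measure.addHaar_ball _ _ (by positivity)
    _ = (N+1 : ℕ) * (ENNReal.ofReal ((2*ρ) ^ 3) * (volume : Measure E3) (ball (0:E3) 1)) := by
        rw [Finset.sum_const, Finset.card_range, dim3]; simp [nsmul_eq_mul]
    _ ≤ ENNReal.ofReal (24 * ρ ^ 2) * (volume : Measure E3) (ball (0:E3) 1) := by
        rw [← mul_assoc]
        refine mul_le_mul_left ?_ _
        have : ((N+1 : ℕ) : ℝ≥0∞) = ENNReal.ofReal ((N:ℝ)+1) := by
          rw [← ENNReal.ofReal_natCast]; push_cast; ring_nf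
        rw [this, ← ENNReal.ofReal_mul (by positivity)]
        refine ENNReal.ofReal_le_ofReal ?_
        have hNle : (N:ℝ) < 1/ρ + 1 := by
          have := Nat.ceil_lt_add_one (a := 1/ρ) (by positivity)
          exact_mod_cast this
        have hNρ : (N:ℝ) * ρ ≤ 1 + ρ := by
          have h := mul_le_mul_of_nonneg_right hNle.le hρ.le
          calc (N:ℝ)*ρ ≤ (1/ρ+1)*ρ := h
            _ = 1 + ρ := by field_simp
        have h3 : (N:ℝ) + 1 ≤ 3/ρ := by
          rw [le_div_iff₀ hρ]; nlinarith
        calc ((N:ℝ)+1) * (2*ρ)^3 ≤ (3/ρ) * (2*ρ)^3 := by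
              have : (0:ℝ) ≤ (2*ρ)^3 := by positivity
              exact mul_le_mul_of_nonneg_right h3 this
          _ = 24 * ρ ^ 2 := by field_simp; ring


lemma toSphere_univ_eq : (volume : Measure E3).toSphere Set.univ
    = 3 * (volume : Measure E3) (ball (0:E3) 1) := by
  rw [Measure.toSphere_apply_univ, dim3]
  norm_num

lemma toSphere_univ_ne_zero : (volume : Measure E3).toSphere Set.univ ≠ 0 := by
  rw [toSphere_univ_eq]
  exact mul_ne_zero (by norm_num) vb_pos.ne'

lemma toSphere_univ_ne_top : (volume : Measure E3).toSphere Set.univ ≠ ∞ :=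
  measure_ne_top _ _

lemma sigma_univ : (((volume : Measure E3).toSphere Set.univ)⁻¹ •
    (volume : Measure E3).toSphere) Set.univ = 1 := by
  rw [Measure.smul_apply, smul_eq_mul]
  exact ENNReal.inv_mul_cancel toSphere_univ_ne_zero toSphere_univ_ne_top

lemma cap_bound (c : E3) (ρ : ℝ) (hρ : 0 < ρ) :
    (((volume : Measure E3).toSphere Set.univ)⁻¹ • (volume : Measure E3).toSphere)
      ((Subtype.val) ⁻¹' ball c ρ : Set (sphere (0:E3) 1))
      ≤ ENNReal.ofReal (96 * min 1 (ρ^2)) := by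
  rcases le_or_gt (1/2 : ℝ) ρ with hhalf | hhalf
  · -- trivial case: measure ≤ 1 ≤ RHS
    have h1 : (((volume : Measure E3).toSphere Set.univ)⁻¹ •
        (volume : Measure E3).toSphere) ((Subtype.val) ⁻¹' ball c ρ) ≤ 1 := by
      rw [← sigma_univ]
      exact measure_mono (Set.subset_univ _)
    refine h1.trans ?_
    rw [ENNReal.one_le_ofReal]
    have : (1:ℝ)/4 ≤ min 1 (ρ^2) := by
      rcases le_total (1:ℝ) (ρ^2) with h | h
      · simp [min_eq_left h]; linarith
      · rw [min_eq_right h]; nlinarith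
    nlinarith
  · -- small cap case
    set s : Set (sphere (0:E3) 1) := (Subtype.val) ⁻¹' ball c ρ with hs
    rcases Set.eq_empty_or_nonempty s with he | ⟨ω₀, hω₀⟩
    · rw [he]; simp
    have hω₀s : ‖(ω₀:E3)‖ = 1 := by
      have := ω₀.2
      simpa [mem_sphere_iff_norm] using this
    have hsub : (Subtype.val '' s : Set E3) ⊆ ball (ω₀:E3) (2*ρ) ∩ sphere (0:E3) 1 := by
      rintro x ⟨ω, hω, rfl⟩
      refine ⟨?_, ω.2⟩
      have h1 : dist (ω:E3) c < ρ := hω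
      have h2 : dist (ω₀:E3) c < ρ := hω₀
      have := dist_triangle (ω:E3) c (ω₀:E3)
      rw [mem_ball]
      rw [dist_comm c (ω₀:E3)] at this
      linarith
    have hmeas : MeasurableSet s := (isOpen_ball.preimage continuous_subtype_val).measurableSet
    have hts : (volume : Measure E3).toSphere s ≤
        ENNReal.ofReal (96 * ρ^2) * (3 * (volume : Measure E3) (ball (0:E3) 1)) := by
      rw [Measure.toSphere_apply' _ hmeas, dim3]
      have hmono : (volume : Measure E3) (Ioo (0:ℝ) 1 • (Subtype.val '' s))
          ≤ (volume : Measure E3) (Ioo (0:ℝ) 1 • (ball (ω₀:E3) (2*ρ) ∩ sphere (0:E3) 1)) :=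
        measure_mono (Set.smul_subset_smul_left hsub)
      have htube := tube_vol (ω₀:E3) hω₀s (2*ρ) (by linarith) (by linarith)
      have h24 : (24 : ℝ) * (2*ρ)^2 = 96 * ρ^2 := by ring
      rw [h24] at htube
      calc (3:ℝ≥0∞) * (volume : Measure E3) (Ioo (0:ℝ) 1 • (Subtype.val '' s))
          ≤ (3:ℝ≥0∞) * (ENNReal.ofReal (96 * ρ^2) * (volume : Measure E3) (ball (0:E3) 1)) :=
            mul_le_mul_right (hmono.trans htube) _
        _ = ENNReal.ofReal (96 * ρ^2) * (3 * (volume : Measure E3) (ball (0:E3) 1)) := by ring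
    have hmin : min 1 (ρ^2) = ρ^2 := by
      rw [min_eq_right]; nlinarith
    rw [Measure.smul_apply, smul_eq_mul, toSphere_univ_eq, hmin]
    calc (3 * (volume : Measure E3) (ball (0:E3) 1))⁻¹ * (volume : Measure E3).toSphere s
        ≤ (3 * (volume : Measure E3) (ball (0:E3) 1))⁻¹ *
          (ENNReal.ofReal (96 * ρ^2) * (3 * (volume : Measure E3) (ball (0:E3) 1))) :=
          mul_le_mul_right hts _
      _ = ENNReal.ofReal (96 * ρ^2) *
          ((3 * (volume : Measure E3) (ball (0:E3) 1))⁻¹ * (3 * (volume : Measure E3) (ball (0:E3) 1))) := by ring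
      _ ≤ ENNReal.ofReal (96 * ρ^2) * 1 := by
          refine mul_le_mul_right ?_ _
          exact ENNReal.inv_mul_le_one _
      _ = ENNReal.ofReal (96 * ρ^2) := mul_one _


lemma min_one_sq_le_pow (k : ℕ) (hk : k = 1 ∨ k = 2) (x : ℝ) (hx : 0 < x) :
    min 1 (x^2) ≤ x^k := by
  rcases hk with rfl | rfl
  · rcases le_total (1:ℝ) x with h | h
    · calc min 1 (x^2) ≤ 1 := min_le_left _ _
        _ ≤ x := h
        _ = x^1 := (pow_one x).symm
    · calc min 1 (x^2) ≤ x^2 := min_le_right _ _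
        _ ≤ x^1 := by nlinarith
  · exact (min_le_right _ _).trans_eq rfl

end SphereDecayAux

open SphereDecayAux in
/-- decay of the spherical integral
`∫_{S²} (1+|r e₁ + t ω|^{k+γ})^{-1} dS(ω) ≤ C t^{-k}` with the normalized surface
measure on the unit sphere of `ℝ³`. -/
theorem sphere_integral_decay (k : ℕ) (hk : k = 1 ∨ k = 2) (γ : ℝ) (hγ : 0 < γ) :
    ∃ C > 0, ∀ r t : ℝ, 0 ≤ r → 0 < t →
      (∫ ω : sphere (0 : EuclideanSpace ℝ (Fin 3)) 1,
          (1 + ‖r • (EuclideanSpace.single 0 1 : EuclideanSpace ℝ (Fin 3))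
                + t • (ω : EuclideanSpace ℝ (Fin 3))‖ ^ ((k : ℝ) + γ))⁻¹
        ∂((((volume : Measure (EuclideanSpace ℝ (Fin 3))).toSphere Set.univ)⁻¹ •
            (volume : Measure (EuclideanSpace ℝ (Fin 3))).toSphere))) ≤
      C * t ^ (-(k : ℝ)) := by
  classical
  set κ : ℝ := (k:ℝ) + γ with hκdef
  have hκ0 : 0 < κ := by
    have : (0:ℝ) ≤ (k:ℝ) := Nat.cast_nonneg k
    rw [hκdef]; linarith
  set q : ℝ := (2:ℝ) ^ (-γ) with hqdef
  have hq0 : 0 < q := Real.rpow_pos_of_pos two_pos _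
  have hq1 : q < 1 := Real.rpow_lt_one_of_one_lt_of_neg one_lt_two (neg_lt_zero.2 hγ)
  have h1q : 0 < 1 - q := by linarith
  have h2κ : (0:ℝ) < 2 ^ κ := Real.rpow_pos_of_pos two_pos _
  refine ⟨96 * 2 ^ κ * (1-q)⁻¹, by positivity, ?_⟩
  intro r t hr ht
  set a : EuclideanSpace ℝ (Fin 3) := r • (EuclideanSpace.single 0 1) with ha
  set u : sphere (0 : EuclideanSpace ℝ (Fin 3)) 1 → ℝ :=
    fun ω => ‖a + t • (ω : EuclideanSpace ℝ (Fin 3))‖ with hu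
  set σ : Measure (sphere (0 : EuclideanSpace ℝ (Fin 3)) 1) :=
    (((volume : Measure (EuclideanSpace ℝ (Fin 3))).toSphere Set.univ)⁻¹ •
      (volume : Measure (EuclideanSpace ℝ (Fin 3))).toSphere) with hσ
  set g : sphere (0 : EuclideanSpace ℝ (Fin 3)) 1 → ℝ := fun ω => (1 + u ω ^ κ)⁻¹ with hg
  have hupos : ∀ ω, 0 ≤ u ω := fun ω => norm_nonneg _
  have hone_add : ∀ ω, 0 < 1 + u ω ^ κ := fun ω => by
    have := Real.rpow_nonneg (hupos ω) κ; linarith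
  have hge0 : ∀ ω, 0 ≤ g ω := fun ω => inv_nonneg.2 (hone_add ω).le
  have hu_cont : Continuous u := (continuous_const.add (continuous_subtype_val.const_smul t)).norm
  have hgcont : Continuous g := by
    have h1 : Continuous fun ω => 1 + u ω ^ κ :=
      continuous_const.add (hu_cont.rpow_const (fun ω => Or.inr hκ0.le))
    exact h1.inv₀ (fun ω => (hone_add ω).ne')
  have humeas : Measurable u := hu_cont.measurable
  set c₀ : EuclideanSpace ℝ (Fin 3) := -(t⁻¹ • a) with hc₀
  have hdist : ∀ ω : sphere (0 : EuclideanSpace ℝ (Fin 3)) 1,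
      dist (ω : EuclideanSpace ℝ (Fin 3)) c₀ = u ω / t := by
    intro ω
    have key : t • ((ω : EuclideanSpace ℝ (Fin 3)) + t⁻¹ • a)
        = a + t • (ω : EuclideanSpace ℝ (Fin 3)) := by
      rw [smul_add, smul_smul, mul_inv_cancel₀ ht.ne', one_smul, add_comm]
    rw [eq_div_iff ht.ne', dist_eq_norm, hc₀, sub_neg_eq_add]
    calc ‖(ω : EuclideanSpace ℝ (Fin 3)) + t⁻¹ • a‖ * t
        = ‖t • ((ω : EuclideanSpace ℝ (Fin 3)) + t⁻¹ • a)‖ := by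
          rw [norm_smul, Real.norm_eq_abs, abs_of_pos ht, mul_comm]
      _ = u ω := by rw [key]
  have hball : ∀ (n:ℕ) ω, u ω < 2^n →
      ω ∈ (Subtype.val ⁻¹' ball c₀ ((2:ℝ)^n/t) : Set (sphere (0 : EuclideanSpace ℝ (Fin 3)) 1)) := by
    intro n ω hlt
    simp only [Set.mem_preimage, mem_ball, hdist]
    gcongr
  set A : ℕ → Set (sphere (0 : EuclideanSpace ℝ (Fin 3)) 1) :=
    fun n => {ω | u ω < 2^n ∧ (2:ℝ)^n ≤ 2 * max 1 (u ω)} with hA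
  have hAmeas : ∀ n, MeasurableSet (A n) := by
    intro n
    have h1 : MeasurableSet {ω | u ω < (2:ℝ)^n} := measurableSet_lt humeas measurable_const
    have h2 : MeasurableSet {ω | (2:ℝ)^n ≤ 2 * max 1 (u ω)} :=
      measurableSet_le measurable_const ((measurable_const.max humeas).const_mul 2)
    exact h1.inter h2
  set cc : ℕ → ℝ≥0∞ := fun n => ENNReal.ofReal (2 ^ κ * ((2:ℝ)^n) ^ (-κ)) with hcc
  set hind : ℕ → (sphere (0 : EuclideanSpace ℝ (Fin 3)) 1) → ℝ≥0∞ :=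
    fun n => (A n).indicator (fun _ => cc n) with hhind
  have hpoint : ∀ ω, ENNReal.ofReal (g ω) ≤ ∑' n, hind n ω := by
    intro ω
    have hu0 : 0 ≤ u ω := hupos ω
    have hgbound : ∀ x : ℝ, 0 < x → x ≤ u ω → g ω ≤ (x ^ κ)⁻¹ := by
      intro x hx hxu
      have h1 : x ^ κ ≤ u ω ^ κ := Real.rpow_le_rpow hx.le hxu hκ0.le
      have h2 : 0 < x ^ κ := Real.rpow_pos_of_pos hx κ
      rw [hg]
      exact inv_anti₀ h2 (by linarith)
    obtain ⟨n, hmem, hgle⟩ : ∃ n, ω ∈ A n ∧ g ω ≤ 2 ^ κ * ((2:ℝ)^n) ^ (-κ) := by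
      rcases lt_or_ge (u ω) 1 with hlt | hge
      · refine ⟨0, ⟨by simpa using hlt, ?_⟩, ?_⟩
        · have : (1:ℝ) ≤ max 1 (u ω) := le_max_left _ _
          simp only [pow_zero]; linarith
        · have hg1 : g ω ≤ 1 := by
            rw [hg]
            have := Real.rpow_nonneg hu0 κ
            exact inv_le_one_of_one_le₀ (by linarith)
          have h1κ : (1:ℝ) ≤ 2 ^ κ := Real.one_le_rpow one_le_two hκ0.le
          calc g ω ≤ 1 := hg1
            _ ≤ 2 ^ κ * ((2:ℝ)^(0:ℕ)) ^ (-κ) := by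
                simp [Real.one_rpow]; linarith
      · set m := Nat.log 2 ⌊u ω⌋₊ with hm
        have hfl1 : 1 ≤ ⌊u ω⌋₊ := Nat.le_floor (by exact_mod_cast hge)
        have h2m : (2:ℝ)^m ≤ u ω := by
          have h1 : 2^m ≤ ⌊u ω⌋₊ := Nat.pow_log_le_self 2 (by omega)
          calc (2:ℝ)^m ≤ (⌊u ω⌋₊ : ℝ) := by exact_mod_cast h1
            _ ≤ u ω := Nat.floor_le hu0
        have h2m1 : u ω < 2^(m+1) := by
          have h1 : ⌊u ω⌋₊ < 2^(m+1) := Nat.lt_pow_succ_log_self one_lt_two _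
          have h2 : u ω < ⌊u ω⌋₊ + 1 := Nat.lt_floor_add_one _
          have h3 : (⌊u ω⌋₊ : ℝ) + 1 ≤ ((2:ℝ))^(m+1) := by
            have h4 : (⌊u ω⌋₊ : ℕ) + 1 ≤ 2^(m+1) := h1
            exact_mod_cast h4
          linarith
        have h2mpos : (0:ℝ) < 2^m := by positivity
        refine ⟨m+1, ⟨h2m1, ?_⟩, ?_⟩
        · have hmx : u ω ≤ max 1 (u ω) := le_max_right _ _
          calc (2:ℝ)^(m+1) = 2 * 2^m := by ring
            _ ≤ 2 * u ω := by linarith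
            _ ≤ 2 * max 1 (u ω) := by linarith
        · have hb := hgbound (2^m) h2mpos h2m
          have hiden : (((2:ℝ)^m) ^ κ)⁻¹ = 2 ^ κ * ((2:ℝ)^(m+1)) ^ (-κ) := by
            have e1 : ((2:ℝ)^(m+1)) ^ (-κ) = (2:ℝ) ^ (-κ) * ((2:ℝ)^m) ^ (-κ) := by
              rw [pow_succ, mul_comm ((2:ℝ)^m) 2, Real.mul_rpow (by norm_num) h2mpos.le]
            rw [e1, ← mul_assoc, ← Real.rpow_add two_pos, add_neg_cancel, Real.rpow_zero, one_mul,
              Real.rpow_neg h2mpos.le]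
          rw [hiden] at hb
          exact hb
    calc ENNReal.ofReal (g ω) ≤ cc n := ENNReal.ofReal_le_ofReal hgle
      _ = hind n ω := by
          simp only [hhind]
          exact (Set.indicator_of_mem hmem (fun _ => cc n)).symm
      _ ≤ ∑' n, hind n ω := ENNReal.le_tsum n
  -- cap measure bounds
  have hσA : ∀ n, σ (A n) ≤ ENNReal.ofReal (96 * min 1 (((2:ℝ)^n/t)^2)) := by
    intro n
    refine (measure_mono ?_).trans (cap_bound c₀ ((2:ℝ)^n/t) (by positivity)) 
    intro ω hω
    exact hball n ω hω.1
  have hT : t ^ (-(k:ℝ)) = ((t:ℝ)^k)⁻¹ := by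
    rw [Real.rpow_neg ht.le, Real.rpow_natCast]
  have hTpos : 0 < t ^ (-(k:ℝ)) := Real.rpow_pos_of_pos ht _
  have hterm : ∀ n, cc n * σ (A n)
      ≤ ENNReal.ofReal (96 * 2 ^ κ * t ^ (-(k:ℝ)) * q ^ n) := by
    intro n
    have h2n : (0:ℝ) < 2^n := by positivity
    have hccnn : 0 ≤ 2 ^ κ * ((2:ℝ)^n) ^ (-κ) :=
      mul_nonneg h2κ.le (Real.rpow_nonneg h2n.le _)
    calc cc n * σ (A n)
        ≤ ENNReal.ofReal (2 ^ κ * ((2:ℝ)^n) ^ (-κ)) *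
            ENNReal.ofReal (96 * min 1 (((2:ℝ)^n/t)^2)) := mul_le_mul_right (hσA n) _
      _ = ENNReal.ofReal ((2 ^ κ * ((2:ℝ)^n) ^ (-κ)) * (96 * min 1 (((2:ℝ)^n/t)^2))) :=
          (ENNReal.ofReal_mul hccnn).symm
      _ ≤ ENNReal.ofReal (96 * 2 ^ κ * t ^ (-(k:ℝ)) * q ^ n) := by
          refine ENNReal.ofReal_le_ofReal ?_
          have hmin : min 1 (((2:ℝ)^n/t)^2) ≤ ((2:ℝ)^n/t)^k :=
            min_one_sq_le_pow k hk _ (by positivity)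
          have step1 : (2 ^ κ * ((2:ℝ)^n) ^ (-κ)) * (96 * min 1 (((2:ℝ)^n/t)^2))
              ≤ (2 ^ κ * ((2:ℝ)^n) ^ (-κ)) * (96 * ((2:ℝ)^n/t)^k) := by
            have h96 : (0:ℝ) < 96 := by norm_num
            refine mul_le_mul_of_nonneg_left ?_ hccnn
            nlinarith
          refine step1.trans_eq ?_
          have e1 : ((2:ℝ)^n/t)^k = ((2:ℝ)^n)^k * ((t:ℝ)^k)⁻¹ := by
            rw [div_pow, div_eq_mul_inv]
          have e2 : ((2:ℝ)^n) ^ (-κ) * ((2:ℝ)^n)^k = q ^ n := by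
            have e3 : ((2:ℝ)^n : ℝ)^(k:ℕ) = ((2:ℝ)^n) ^ ((k:ℕ):ℝ) :=
              (Real.rpow_natCast _ _).symm
            rw [e3, ← Real.rpow_add h2n]
            have e4 : -κ + (k:ℝ) = -γ := by rw [hκdef]; ring
            rw [e4]
            rw [← Real.rpow_natCast (2:ℝ) n, ← Real.rpow_mul (by norm_num : (0:ℝ) ≤ 2),
              hqdef, ← Real.rpow_natCast ((2:ℝ)^(-γ)) n,
              ← Real.rpow_mul (by norm_num : (0:ℝ) ≤ 2), mul_comm]
          rw [e1, hT]
          calc 2 ^ κ * ((2:ℝ)^n) ^ (-κ) * (96 * (((2:ℝ)^n)^k * ((t:ℝ)^k)⁻¹))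
              = 96 * 2 ^ κ * ((t:ℝ)^k)⁻¹ * (((2:ℝ)^n) ^ (-κ) * ((2:ℝ)^n)^k) := by ring
            _ = 96 * 2 ^ κ * ((t:ℝ)^k)⁻¹ * q ^ n := by rw [e2]
  have hK : (0:ℝ) ≤ 96 * 2 ^ κ * t ^ (-(k:ℝ)) := by positivity
  have hsum : ∑' n, ENNReal.ofReal (96 * 2 ^ κ * t ^ (-(k:ℝ)) * q ^ n)
      = ENNReal.ofReal (96 * 2 ^ κ * (1-q)⁻¹ * t ^ (-(k:ℝ))) := by
    calc ∑' (n:ℕ), ENNReal.ofReal (96 * 2 ^ κ * t ^ (-(k:ℝ)) * q ^ n)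
        = ∑' (n:ℕ), ENNReal.ofReal (96 * 2 ^ κ * t ^ (-(k:ℝ))) * (ENNReal.ofReal q) ^ n := by
          refine tsum_congr fun n => ?_
          rw [← ENNReal.ofReal_pow hq0.le, ← ENNReal.ofReal_mul hK]
      _ = ENNReal.ofReal (96 * 2 ^ κ * t ^ (-(k:ℝ))) * ∑' (n:ℕ), (ENNReal.ofReal q) ^ n :=
          ENNReal.tsum_mul_left
      _ = ENNReal.ofReal (96 * 2 ^ κ * t ^ (-(k:ℝ))) * (1 - ENNReal.ofReal q)⁻¹ := by
          rw [ENNReal.tsum_geometric]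
      _ = ENNReal.ofReal (96 * 2 ^ κ * (1-q)⁻¹ * t ^ (-(k:ℝ))) := by
          rw [← ENNReal.ofReal_one, ← ENNReal.ofReal_sub _ hq0.le,
            ← ENNReal.ofReal_inv_of_pos h1q, ← ENNReal.ofReal_mul hK]
          exact congrArg ENNReal.ofReal (by ring)
  have hlin : (∫⁻ ω, ENNReal.ofReal (g ω) ∂σ)
      ≤ ENNReal.ofReal (96 * 2 ^ κ * (1-q)⁻¹ * t ^ (-(k:ℝ))) := by
    calc (∫⁻ ω, ENNReal.ofReal (g ω) ∂σ) ≤ ∫⁻ ω, ∑' n, hind n ω ∂σ := lintegral_mono hpoint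
      _ = ∑' n, ∫⁻ ω, hind n ω ∂σ :=
          lintegral_tsum fun n => (measurable_const.indicator (hAmeas n)).aemeasurable
      _ = ∑' n, cc n * σ (A n) := by
          refine tsum_congr fun n => ?_
          simp only [hhind]
          exact lintegral_indicator_const (hAmeas n) _
      _ ≤ ∑' n, ENNReal.ofReal (96 * 2 ^ κ * t ^ (-(k:ℝ)) * q ^ n) := ENNReal.tsum_le_tsum hterm
      _ = ENNReal.ofReal (96 * 2 ^ κ * (1-q)⁻¹ * t ^ (-(k:ℝ))) := hsum
  show (∫ ω, g ω ∂σ) ≤ 96 * 2 ^ κ * (1-q)⁻¹ * t ^ (-(k:ℝ))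
  rw [integral_eq_lintegral_of_nonneg_ae (Filter.Eventually.of_forall hge0)
    hgcont.aestronglyMeasurable]
  have hfin := ENNReal.toReal_mono ENNReal.ofReal_ne_top hlin
  rw [ENNReal.toReal_ofReal (by positivity)] at hfin
  exact hfin
end
end

section
/- For any null form Q (i.e. Q = Q₀ or Q = Q_{αβ}), there is a constant C such that for all smooth φ, ψ on ℝ^{1+3}: |Q(∂φ, ∂ψ)| ≤ C(|∂̄φ||∂ψ| + |∂φ||∂̄ψ|), where ∂̄ denotes derivatives tangent to the outgoing Minkowski light cones and ∂ the full space-time gradient. -/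
open Real

/-- The diagonal Minkowski metric `m = diag(-1,1,1,1)`. -/
noncomputable def eta (α : Fin 4) : ℝ := if α = 0 then -1 else 1

/-- A null form: a constant-coefficient linear combination of
`Q₀(u,v) = m^{αβ}u_α v_β` and `Q_{αβ}(u,v) = u_α v_β - u_β v_α`. -/
def IsNullForm (Q : (Fin 4 → ℝ) → (Fin 4 → ℝ) → ℝ) : Prop :=
  ∃ (c : ℝ) (d : Fin 4 → Fin 4 → ℝ), ∀ u v, Q u v =
    c * (∑ α : Fin 4, eta α * u α * v α) +
      ∑ α : Fin 4, ∑ β : Fin 4, d α β * (u α * v β - u β * v α)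

/-- The space-time gradient `(∂_α φ)_α` (coordinate `0` is time). -/
noncomputable def grad4 (φ : (Fin 4 → ℝ) → ℝ) (y : Fin 4 → ℝ) : Fin 4 → ℝ :=
  fun α => fderiv ℝ φ y (Pi.single α 1)

/-- Euclidean norm of the spatial part. -/
noncomputable def spnorm (y : Fin 4 → ℝ) : ℝ := Real.sqrt (∑ i : Fin 3, (y i.succ)^2)

/-- `|∂̄φ|`: size of the derivatives tangent to the outgoing light cones,
`∂̄₀φ = ∂_tφ + ∂_rφ`, `∂̄_iφ = ∂_iφ - ω_iω^j∂_jφ`, with `ω = x/|x|`. -/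
noncomputable def tanGradNorm (u : Fin 4 → ℝ) (y : Fin 4 → ℝ) : ℝ :=
  Real.sqrt ((u 0 + ∑ i : Fin 3, (y i.succ / spnorm y) * u i.succ)^2 +
    ∑ i : Fin 3, (u i.succ -
      (y i.succ / spnorm y) * ∑ j : Fin 3, (y j.succ / spnorm y) * u j.succ)^2)

/-- `|∂φ|`: size of the full space-time gradient. -/
noncomputable def fullGradNorm (u : Fin 4 → ℝ) : ℝ :=
  Real.sqrt (∑ α : Fin 4, (u α)^2)

/- ### Auxiliary machinery: pure linear algebra with a unit vector `ω`. -/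

/-- Radial component. -/
noncomputable def urad (ω : Fin 3 → ℝ) (u : Fin 4 → ℝ) : ℝ := ∑ i : Fin 3, ω i * u i.succ

/-- Tangential norm relative to an abstract direction `ω`. -/
noncomputable def tanN (ω : Fin 3 → ℝ) (u : Fin 4 → ℝ) : ℝ :=
  Real.sqrt ((u 0 + urad ω u)^2 + ∑ i : Fin 3, (u i.succ - ω i * urad ω u)^2)

lemma fullGradNorm_nonneg (u : Fin 4 → ℝ) : 0 ≤ fullGradNorm u := Real.sqrt_nonneg _

lemma tanN_nonneg (ω : Fin 3 → ℝ) (u : Fin 4 → ℝ) : 0 ≤ tanN ω u := Real.sqrt_nonneg _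

lemma abs_le_full (u : Fin 4 → ℝ) (α : Fin 4) : |u α| ≤ fullGradNorm u := by
  rw [← Real.sqrt_sq_eq_abs]
  exact Real.sqrt_le_sqrt (Finset.single_le_sum (f := fun β => (u β)^2)
    (fun _ _ => sq_nonneg _) (Finset.mem_univ α))

lemma sp_sum_le_full_sq (u : Fin 4 → ℝ) :
    ∑ i : Fin 3, (u i.succ)^2 ≤ ∑ α : Fin 4, (u α)^2 := by
  rw [Fin.sum_univ_succ (f := fun α => (u α)^2)]
  nlinarith [sq_nonneg (u 0)]

lemma abs_urad_le (ω : Fin 3 → ℝ) (hω : ∑ i : Fin 3, (ω i)^2 = 1) (u : Fin 4 → ℝ) :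
    |urad ω u| ≤ fullGradNorm u := by
  rw [← Real.sqrt_sq_eq_abs]
  apply Real.sqrt_le_sqrt
  calc (urad ω u)^2 ≤ (∑ i : Fin 3, (ω i)^2) * ∑ i : Fin 3, (u i.succ)^2 :=
        Finset.sum_mul_sq_le_sq_mul_sq _ _ _
    _ = ∑ i : Fin 3, (u i.succ)^2 := by rw [hω, one_mul]
    _ ≤ ∑ α : Fin 4, (u α)^2 := sp_sum_le_full_sq u

lemma abs_T0_le (ω : Fin 3 → ℝ) (u : Fin 4 → ℝ) : |u 0 + urad ω u| ≤ tanN ω u := by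
  rw [← Real.sqrt_sq_eq_abs]
  apply Real.sqrt_le_sqrt
  have : 0 ≤ ∑ i : Fin 3, (u i.succ - ω i * urad ω u)^2 :=
    Finset.sum_nonneg fun _ _ => sq_nonneg _
  linarith

lemma abs_Ti_le (ω : Fin 3 → ℝ) (u : Fin 4 → ℝ) (i : Fin 3) :
    |u i.succ - ω i * urad ω u| ≤ tanN ω u := by
  rw [← Real.sqrt_sq_eq_abs]
  apply Real.sqrt_le_sqrt
  have h1 : (u i.succ - ω i * urad ω u)^2 ≤ ∑ j : Fin 3, (u j.succ - ω j * urad ω u)^2 :=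
    Finset.single_le_sum (f := fun j => (u j.succ - ω j * urad ω u)^2)
      (fun _ _ => sq_nonneg _) (Finset.mem_univ i)
  nlinarith [sq_nonneg (u 0 + urad ω u)]

lemma abs_omega_le (ω : Fin 3 → ℝ) (hω : ∑ i : Fin 3, (ω i)^2 = 1) (i : Fin 3) :
    |ω i| ≤ 1 := by
  rw [← Real.sqrt_sq_eq_abs]
  rw [show (1:ℝ) = Real.sqrt 1 by simp]
  apply Real.sqrt_le_sqrt
  rw [← hω]
  exact Finset.single_le_sum (f := fun j => (ω j)^2) (fun _ _ => sq_nonneg _) (Finset.mem_univ i)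

lemma cs_tan (ω : Fin 3 → ℝ) (u v : Fin 4 → ℝ) :
    |∑ i : Fin 3, (u i.succ - ω i * urad ω u) * v i.succ| ≤ tanN ω u * fullGradNorm v := by
  rw [← Real.sqrt_sq_eq_abs]
  calc Real.sqrt ((∑ i : Fin 3, (u i.succ - ω i * urad ω u) * v i.succ)^2)
      ≤ Real.sqrt ((∑ i : Fin 3, (u i.succ - ω i * urad ω u)^2) * ∑ i : Fin 3, (v i.succ)^2) :=
        Real.sqrt_le_sqrt (Finset.sum_mul_sq_le_sq_mul_sq _ _ _)
    _ = Real.sqrt (∑ i : Fin 3, (u i.succ - ω i * urad ω u)^2) *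
          Real.sqrt (∑ i : Fin 3, (v i.succ)^2) := by
        rw [Real.sqrt_mul (Finset.sum_nonneg fun _ _ => sq_nonneg _)]
    _ ≤ tanN ω u * fullGradNorm v := by
        apply mul_le_mul
        · apply Real.sqrt_le_sqrt
          nlinarith [sq_nonneg (u 0 + urad ω u)]
        · exact Real.sqrt_le_sqrt (sp_sum_le_full_sq v)
        · exact Real.sqrt_nonneg _
        · exact tanN_nonneg ω u

/-- Bound for the `Q₀` part. -/
lemma Q0_bound (ω : Fin 3 → ℝ) (hω : ∑ i : Fin 3, (ω i)^2 = 1) (u v : Fin 4 → ℝ) :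
    |∑ α : Fin 4, eta α * u α * v α| ≤
      2 * (tanN ω u * fullGradNorm v + fullGradNorm u * tanN ω v) := by
  have hid : ∑ α : Fin 4, eta α * u α * v α =
      (u 0 + urad ω u) * urad ω v - u 0 * (v 0 + urad ω v)
        + ∑ i : Fin 3, (u i.succ - ω i * urad ω u) * v i.succ := by
    have e0 : ((0:Fin 3).succ : Fin 4) = 1 := rfl
    have e1 : ((1:Fin 3).succ : Fin 4) = 2 := rfl
    have e2 : ((2:Fin 3).succ : Fin 4) = 3 := rfl
    simp only [eta, urad, Fin.sum_univ_four, Fin.sum_univ_three, e0, e1, e2,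
      if_neg (show (1:Fin 4) ≠ 0 by decide), if_neg (show (2:Fin 4) ≠ 0 by decide),
      if_neg (show (3:Fin 4) ≠ 0 by decide), if_pos rfl]
    norm_num
    ring
  rw [hid]
  have h1 : |(u 0 + urad ω u) * urad ω v| ≤ tanN ω u * fullGradNorm v := by
    rw [abs_mul]
    exact mul_le_mul (abs_T0_le ω u) (abs_urad_le ω hω v) (abs_nonneg _) (tanN_nonneg ω u)
  have h2 : |u 0 * (v 0 + urad ω v)| ≤ fullGradNorm u * tanN ω v := by
    rw [abs_mul]
    exact mul_le_mul (abs_le_full u 0) (abs_T0_le ω v) (abs_nonneg _) (fullGradNorm_nonneg u)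
  have h3 := cs_tan ω u v
  calc |(u 0 + urad ω u) * urad ω v - u 0 * (v 0 + urad ω v)
        + ∑ i : Fin 3, (u i.succ - ω i * urad ω u) * v i.succ|
      ≤ |(u 0 + urad ω u) * urad ω v - u 0 * (v 0 + urad ω v)|
        + |∑ i : Fin 3, (u i.succ - ω i * urad ω u) * v i.succ| := abs_add_le _ _
    _ ≤ |(u 0 + urad ω u) * urad ω v| + |u 0 * (v 0 + urad ω v)|
        + |∑ i : Fin 3, (u i.succ - ω i * urad ω u) * v i.succ| := by
        have := abs_sub ((u 0 + urad ω u) * urad ω v) (u 0 * (v 0 + urad ω v))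
        linarith
    _ ≤ 2 * (tanN ω u * fullGradNorm v + fullGradNorm u * tanN ω v) := by
        have h4 : 0 ≤ fullGradNorm u * tanN ω v :=
          mul_nonneg (fullGradNorm_nonneg u) (tanN_nonneg ω v)
        linarith

/-- Bound for `Q_{0i}`. -/
lemma Q0i_bound (ω : Fin 3 → ℝ) (hω : ∑ i : Fin 3, (ω i)^2 = 1) (u v : Fin 4 → ℝ) (i : Fin 3) :
    |u 0 * v i.succ - u i.succ * v 0| ≤
      2 * (tanN ω u * fullGradNorm v + fullGradNorm u * tanN ω v) := by
  have hid : u 0 * v i.succ - u i.succ * v 0 =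
      (u 0 + urad ω u) * v i.succ - (u i.succ - ω i * urad ω u) * v 0
        - urad ω u * ((v i.succ - ω i * urad ω v) + ω i * (v 0 + urad ω v)) := by ring
  rw [hid]
  have h1 : |(u 0 + urad ω u) * v i.succ| ≤ tanN ω u * fullGradNorm v := by
    rw [abs_mul]
    exact mul_le_mul (abs_T0_le ω u) (abs_le_full v i.succ) (abs_nonneg _) (tanN_nonneg ω u)
  have h2 : |(u i.succ - ω i * urad ω u) * v 0| ≤ tanN ω u * fullGradNorm v := by
    rw [abs_mul]
    exact mul_le_mul (abs_Ti_le ω u i) (abs_le_full v 0) (abs_nonneg _) (tanN_nonneg ω u)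
  have h3 : |urad ω u * ((v i.succ - ω i * urad ω v) + ω i * (v 0 + urad ω v))| ≤
      fullGradNorm u * (2 * tanN ω v) := by
    rw [abs_mul]
    apply mul_le_mul (abs_urad_le ω hω u) _ (abs_nonneg _) (fullGradNorm_nonneg u)
    calc |(v i.succ - ω i * urad ω v) + ω i * (v 0 + urad ω v)|
        ≤ |v i.succ - ω i * urad ω v| + |ω i * (v 0 + urad ω v)| := abs_add_le _ _
      _ ≤ tanN ω v + |ω i| * |v 0 + urad ω v| := by rw [abs_mul]; linarith [abs_Ti_le ω v i]
      _ ≤ tanN ω v + 1 * tanN ω v := by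
          have := mul_le_mul (abs_omega_le ω hω i) (abs_T0_le ω v) (abs_nonneg _) zero_le_one
          linarith
      _ = 2 * tanN ω v := by ring
  calc |(u 0 + urad ω u) * v i.succ - (u i.succ - ω i * urad ω u) * v 0
        - urad ω u * ((v i.succ - ω i * urad ω v) + ω i * (v 0 + urad ω v))|
      ≤ |(u 0 + urad ω u) * v i.succ - (u i.succ - ω i * urad ω u) * v 0|
        + |urad ω u * ((v i.succ - ω i * urad ω v) + ω i * (v 0 + urad ω v))| := abs_sub _ _
    _ ≤ |(u 0 + urad ω u) * v i.succ| + |(u i.succ - ω i * urad ω u) * v 0|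
        + |urad ω u * ((v i.succ - ω i * urad ω v) + ω i * (v 0 + urad ω v))| := by
        have := abs_sub ((u 0 + urad ω u) * v i.succ) ((u i.succ - ω i * urad ω u) * v 0)
        linarith
    _ ≤ 2 * (tanN ω u * fullGradNorm v + fullGradNorm u * tanN ω v) := by linarith

/-- Bound for `Q_{ij}`. -/
lemma Qij_bound (ω : Fin 3 → ℝ) (hω : ∑ i : Fin 3, (ω i)^2 = 1) (u v : Fin 4 → ℝ)
    (i j : Fin 3) :
    |u i.succ * v j.succ - u j.succ * v i.succ| ≤
      2 * (tanN ω u * fullGradNorm v + fullGradNorm u * tanN ω v) := by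
  have hid : u i.succ * v j.succ - u j.succ * v i.succ =
      (u i.succ - ω i * urad ω u) * v j.succ - (u j.succ - ω j * urad ω u) * v i.succ
        + urad ω u * (ω i * (v j.succ - ω j * urad ω v) - ω j * (v i.succ - ω i * urad ω v)) := by
    ring
  rw [hid]
  have h1 : |(u i.succ - ω i * urad ω u) * v j.succ| ≤ tanN ω u * fullGradNorm v := by
    rw [abs_mul]
    exact mul_le_mul (abs_Ti_le ω u i) (abs_le_full v j.succ) (abs_nonneg _) (tanN_nonneg ω u)
  have h2 : |(u j.succ - ω j * urad ω u) * v i.succ| ≤ tanN ω u * fullGradNorm v := by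
    rw [abs_mul]
    exact mul_le_mul (abs_Ti_le ω u j) (abs_le_full v i.succ) (abs_nonneg _) (tanN_nonneg ω u)
  have h3 : |urad ω u * (ω i * (v j.succ - ω j * urad ω v) - ω j * (v i.succ - ω i * urad ω v))| ≤
      fullGradNorm u * (2 * tanN ω v) := by
    rw [abs_mul]
    apply mul_le_mul (abs_urad_le ω hω u) _ (abs_nonneg _) (fullGradNorm_nonneg u)
    calc |ω i * (v j.succ - ω j * urad ω v) - ω j * (v i.succ - ω i * urad ω v)|
        ≤ |ω i * (v j.succ - ω j * urad ω v)| + |ω j * (v i.succ - ω i * urad ω v)| := abs_sub _ _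
      _ ≤ 1 * tanN ω v + 1 * tanN ω v := by
          rw [abs_mul, abs_mul]
          have hi := mul_le_mul (abs_omega_le ω hω i) (abs_Ti_le ω v j) (abs_nonneg _) zero_le_one
          have hj := mul_le_mul (abs_omega_le ω hω j) (abs_Ti_le ω v i) (abs_nonneg _) zero_le_one
          linarith
      _ = 2 * tanN ω v := by ring
  calc |(u i.succ - ω i * urad ω u) * v j.succ - (u j.succ - ω j * urad ω u) * v i.succ
        + urad ω u * (ω i * (v j.succ - ω j * urad ω v) - ω j * (v i.succ - ω i * urad ω v))|
      ≤ |(u i.succ - ω i * urad ω u) * v j.succ - (u j.succ - ω j * urad ω u) * v i.succ|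
        + |urad ω u * (ω i * (v j.succ - ω j * urad ω v) - ω j * (v i.succ - ω i * urad ω v))| :=
        abs_add_le _ _
    _ ≤ |(u i.succ - ω i * urad ω u) * v j.succ| + |(u j.succ - ω j * urad ω u) * v i.succ|
        + |urad ω u * (ω i * (v j.succ - ω j * urad ω v) - ω j * (v i.succ - ω i * urad ω v))| := by
        have := abs_sub ((u i.succ - ω i * urad ω u) * v j.succ)
          ((u j.succ - ω j * urad ω u) * v i.succ)
        linarith
    _ ≤ 2 * (tanN ω u * fullGradNorm v + fullGradNorm u * tanN ω v) := by linarith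

/-- Bound for a general `Q_{αβ}`. -/
lemma Qab_bound (ω : Fin 3 → ℝ) (hω : ∑ i : Fin 3, (ω i)^2 = 1) (u v : Fin 4 → ℝ)
    (α β : Fin 4) :
    |u α * v β - u β * v α| ≤
      2 * (tanN ω u * fullGradNorm v + fullGradNorm u * tanN ω v) := by
  have hS : 0 ≤ tanN ω u * fullGradNorm v + fullGradNorm u * tanN ω v :=
    add_nonneg (mul_nonneg (tanN_nonneg ω u) (fullGradNorm_nonneg v))
      (mul_nonneg (fullGradNorm_nonneg u) (tanN_nonneg ω v))
  induction α using Fin.cases with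
  | zero =>
    induction β using Fin.cases with
    | zero => simp; linarith
    | succ j => exact Q0i_bound ω hω u v j
  | succ i =>
    induction β using Fin.cases with
    | zero => rw [abs_sub_comm]; exact Q0i_bound ω hω u v i
    | succ j => exact Qij_bound ω hω u v i j

/-- the null form estimate
`|Q(∂φ,∂ψ)| ≤ C(|∂̄φ||∂ψ| + |∂φ||∂̄ψ|)` at every point with `x ≠ 0`. -/
theorem nullform_tangential_estimate
    (Q : (Fin 4 → ℝ) → (Fin 4 → ℝ) → ℝ) (hQ : IsNullForm Q) :
    ∃ C > 0, ∀ (φ ψ : (Fin 4 → ℝ) → ℝ), ContDiff ℝ (⊤ : ℕ∞) φ → ContDiff ℝ (⊤ : ℕ∞) ψ →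
      ∀ y : Fin 4 → ℝ, spnorm y ≠ 0 →
      |Q (grad4 φ y) (grad4 ψ y)| ≤
        C * (tanGradNorm (grad4 φ y) y * fullGradNorm (grad4 ψ y) +
          fullGradNorm (grad4 φ y) * tanGradNorm (grad4 ψ y) y) := by
  obtain ⟨c, d, hQcd⟩ := hQ
  set D : ℝ := ∑ α : Fin 4, ∑ β : Fin 4, |d α β| with hD
  have hD0 : 0 ≤ D :=
    Finset.sum_nonneg fun _ _ => Finset.sum_nonneg fun _ _ => abs_nonneg _
  refine ⟨2 * |c| + 2 * D + 1, by positivity, ?_⟩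
  intro φ ψ _ _ y hy
  set u := grad4 φ y
  set v := grad4 ψ y
  set ω : Fin 3 → ℝ := fun i => y i.succ / spnorm y with hωdef
  have hω : ∑ i : Fin 3, (ω i)^2 = 1 := by
    have hsq : spnorm y ^ 2 = ∑ i : Fin 3, (y i.succ)^2 :=
      Real.sq_sqrt (Finset.sum_nonneg fun _ _ => sq_nonneg _)
    simp only [hωdef, div_pow]
    rw [← Finset.sum_div, ← hsq, div_self (pow_ne_zero 2 hy)]
  have htanu : tanGradNorm u y = tanN ω u := rfl
  have htanv : tanGradNorm v y = tanN ω v := rfl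
  rw [htanu, htanv, hQcd]
  set S : ℝ := tanN ω u * fullGradNorm v + fullGradNorm u * tanN ω v with hS
  have hS0 : 0 ≤ S :=
    add_nonneg (mul_nonneg (tanN_nonneg ω u) (fullGradNorm_nonneg v))
      (mul_nonneg (fullGradNorm_nonneg u) (tanN_nonneg ω v))
  have h1 : |c * ∑ α : Fin 4, eta α * u α * v α| ≤ |c| * (2 * S) := by
    rw [abs_mul]
    exact mul_le_mul_of_nonneg_left (Q0_bound ω hω u v) (abs_nonneg c)
  have h2 : |∑ α : Fin 4, ∑ β : Fin 4, d α β * (u α * v β - u β * v α)| ≤ D * (2 * S) := by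
    calc |∑ α : Fin 4, ∑ β : Fin 4, d α β * (u α * v β - u β * v α)|
        ≤ ∑ α : Fin 4, |∑ β : Fin 4, d α β * (u α * v β - u β * v α)| :=
          Finset.abs_sum_le_sum_abs _ _
      _ ≤ ∑ α : Fin 4, ∑ β : Fin 4, |d α β * (u α * v β - u β * v α)| :=
          Finset.sum_le_sum fun α _ => Finset.abs_sum_le_sum_abs _ _
      _ ≤ ∑ α : Fin 4, ∑ β : Fin 4, |d α β| * (2 * S) := by
          refine Finset.sum_le_sum fun α _ => Finset.sum_le_sum fun β _ => ?_
          rw [abs_mul]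
          exact mul_le_mul_of_nonneg_left (Qab_bound ω hω u v α β) (abs_nonneg _)
      _ = D * (2 * S) := by
          rw [hD]
          simp [← Finset.sum_mul]
  calc |c * (∑ α : Fin 4, eta α * u α * v α)
        + ∑ α : Fin 4, ∑ β : Fin 4, d α β * (u α * v β - u β * v α)|
      ≤ |c * ∑ α : Fin 4, eta α * u α * v α|
        + |∑ α : Fin 4, ∑ β : Fin 4, d α β * (u α * v β - u β * v α)| := abs_add_le _ _
    _ ≤ |c| * (2 * S) + D * (2 * S) := add_le_add h1 h2
    _ ≤ (2 * |c| + 2 * D + 1) * S := by nlinarith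
end
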